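/- The function μ(φ) = (φ − sin φ cos φ)/sin²φ maps (0,π) bijectively and strictly increasingly onto (0,∞): μ(φ) → 0 as φ → 0⁺, μ(φ) → +∞ as φ → π⁻, and for every u > 0 there exists a unique φ ∈ (0,π) with μ(φ) = u. -/

import Mathlib

/-! `μ' = 2 (sin φ − φ cos φ) / sin³ φ > 0` on `(0, π)`, so `μ` is strictly increasing. Near `0`,
`φ − sin φ cos φ = (2φ − sin 2φ)/2 ≤ 2φ³/3` and Jordan's inequality `sin φ ≥ 2φ/π` give
`0 < μ φ ≤ π²φ/6`; near `π` the numerator tends to `π` while `sin² φ → 0⁺`. The intermediate value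
theorem on `(0, π)` then yields every value in `(0, ∞)`, exactly once by strict monotonicity. -/

open Real Filter Set Topology

/-- `μ(φ) = (φ − sin φ cos φ)/sin²φ`. -/
noncomputable def muH (φ : ℝ) : ℝ := (φ - Real.sin φ * Real.cos φ) / (Real.sin φ) ^ 2

theorem StrictMonoOn.existsUnique_eq_of_tendsto {α β : Type*} [ConditionallyCompleteLinearOrder α]
    [TopologicalSpace α] [OrderTopology α] [DenselyOrdered α] [LinearOrder β] [TopologicalSpace β]
    [OrderClosedTopology β] {f : α → β} {a b : α} (hab : a < b) (hf : StrictMonoOn f (Ioo a b))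
    (hcont : ContinuousOn f (Ioo a b)) {v : β} (ha : Tendsto f (𝓝[>] a) (𝓝 v))
    (hb : Tendsto f (𝓝[<] b) atTop) {u : β} (hu : v < u) :
    ∃! x, x ∈ Ioo a b ∧ f x = u := by
  have := nhdsGT_neBot_of_exists_gt ⟨b, hab⟩
  have := nhdsLT_neBot_of_exists_lt ⟨a, hab⟩
  obtain ⟨x, hx, rfl⟩ := isPreconnected_Ioo.intermediate_value_Ioi
    (le_principal_iff.mpr (Ioo_mem_nhdsGT hab)) (le_principal_iff.mpr (Ioo_mem_nhdsLT hab))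
    hcont ha hb hu
  exact ⟨x, ⟨hx, rfl⟩, fun y hy => hf.injOn hy.1 hx hy.2⟩

theorem sin_sub_mul_cos_pos {x : ℝ} (hx : x ∈ Ioo 0 π) : 0 < sin x - x * cos x := by
  obtain ⟨hx0, hxπ⟩ := hx
  have hsin : 0 < sin x := sin_pos_of_pos_of_lt_pi hx0 hxπ
  rcases le_or_gt (cos x) 0 with hcos | hcos
  · nlinarith
  · have hxπ2 : x < π / 2 := by
      by_contra! h
      exact (cos_nonpos_of_pi_div_two_le_of_le h (by linarith)).not_gt hcos
    have htan : x < sin x / cos x := tan_eq_sin_div_cos x ▸ lt_tan hx0 hxπ2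
    linarith [(lt_div_iff₀ hcos).mp htan]

theorem hasDerivAt_muH {φ : ℝ} (hs : sin φ ≠ 0) :
    HasDerivAt muH (2 * (sin φ - φ * cos φ) / sin φ ^ 3) φ := by
  have hnum : HasDerivAt (fun φ => φ - sin φ * cos φ) (1 - (cos φ * cos φ + sin φ * -sin φ)) φ :=
    (hasDerivAt_id φ).sub ((hasDerivAt_sin φ).mul (hasDerivAt_cos φ))
  have hden : HasDerivAt (fun φ => sin φ ^ 2) ((2 : ℕ) * sin φ ^ 1 * cos φ) φ :=
    (hasDerivAt_sin φ).pow 2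
  refine (hnum.div hden (pow_ne_zero 2 hs)).congr_deriv ?_
  field_simp
  linear_combination sin φ * sin_sq_add_cos_sq φ

theorem continuousOn_muH : ContinuousOn muH (Ioo 0 π) :=
  ContinuousOn.div (by fun_prop) (by fun_prop) fun _ hφ =>
    pow_ne_zero 2 (sin_pos_of_pos_of_lt_pi hφ.1 hφ.2).ne'

theorem strictMonoOn_muH : StrictMonoOn muH (Ioo 0 π) := by
  refine strictMonoOn_of_deriv_pos (convex_Ioo 0 π) continuousOn_muH fun φ hφ => ?_
  rw [interior_Ioo] at hφ
  have hsin : 0 < sin φ := sin_pos_of_pos_of_lt_pi hφ.1 hφ.2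
  rw [(hasDerivAt_muH hsin.ne').deriv]
  have := sin_sub_mul_cos_pos hφ
  positivity

theorem muH_pos {φ : ℝ} (hφ : φ ∈ Ioo 0 π) : 0 < muH φ := by
  have hsin : 0 < sin φ := sin_pos_of_pos_of_lt_pi hφ.1 hφ.2
  have h2φ : sin (2 * φ) < 2 * φ := sin_lt (by linarith [hφ.1])
  rw [sin_two_mul] at h2φ
  exact div_pos (by linarith) (by positivity)

theorem muH_le {φ : ℝ} (hφ0 : 0 < φ) (hφ : φ ≤ π / 2) : muH φ ≤ π ^ 2 / 6 * φ := by
  have hsin : 0 < sin φ := sin_pos_of_pos_of_lt_pi hφ0 (by linarith [pi_pos])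
  have hcube : 2 * φ - (2 * φ) ^ 3 / 6 ≤ sin (2 * φ) := sin_ge_sub_cube (by linarith)
  rw [sin_two_mul] at hcube
  have hjordan : 2 / π * φ ≤ sin φ := mul_le_sin hφ0.le hφ
  have hjordan_sq : (2 / π * φ) ^ 2 ≤ sin φ ^ 2 := pow_le_pow_left₀ (by positivity) hjordan 2
  rw [muH, div_le_iff₀ (by positivity)]
  calc φ - sin φ * cos φ ≤ π ^ 2 / 6 * φ * (2 / π * φ) ^ 2 := by
        field_simp
        nlinarith
    _ ≤ π ^ 2 / 6 * φ * sin φ ^ 2 := by gcongr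

theorem tendsto_muH_nhdsGT_zero : Tendsto muH (𝓝[>] 0) (𝓝 0) := by
  have hlin : Tendsto (fun φ : ℝ => π ^ 2 / 6 * φ) (𝓝[>] 0) (𝓝 0) :=
    ((continuous_const_mul _).tendsto' 0 0 (mul_zero _)).mono_left nhdsWithin_le_nhds
  refine tendsto_of_tendsto_of_tendsto_of_le_of_le' tendsto_const_nhds hlin ?_ ?_
  · filter_upwards [Ioo_mem_nhdsGT pi_pos] with φ hφ using (muH_pos hφ).le
  · filter_upwards [Ioc_mem_nhdsGT (by positivity : (0 : ℝ) < π / 2)] with φ hφ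
      using muH_le hφ.1 hφ.2

theorem tendsto_muH_nhdsLT_pi : Tendsto muH (𝓝[<] π) atTop := by
  have hnum : Tendsto (fun φ => φ - sin φ * cos φ) (𝓝[<] π) (𝓝 π) :=
    ((by fun_prop : Continuous fun φ => φ - sin φ * cos φ).tendsto' π π (by simp)).mono_left
      nhdsWithin_le_nhds
  have hden : Tendsto (fun φ => sin φ ^ 2) (𝓝[<] π) (𝓝[>] 0) := by
    refine tendsto_nhdsWithin_iff.mpr ⟨?_, ?_⟩
    · exact ((continuous_sin.pow 2).tendsto' π 0 (by simp)).mono_left nhdsWithin_le_nhds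
    · filter_upwards [Ioo_mem_nhdsLT pi_pos] with φ hφ
      exact pow_pos (sin_pos_of_pos_of_lt_pi hφ.1 hφ.2) 2
  exact (hnum.pos_mul_atTop pi_pos hden.inv_tendsto_nhdsGT_zero).congr fun φ =>
    (div_eq_mul_inv _ _).symm

/-- `μ` maps `(0,π)` bijectively and strictly increasingly onto `(0,∞)`:
it is strictly increasing, tends to `0` as `φ → 0⁺`, tends to `+∞` as `φ → π⁻`,
and every `u > 0` equals `μ(φ)` for a unique `φ ∈ (0,π)`. -/
theorem muH_bijective_onto_pos :
    StrictMonoOn muH (Set.Ioo 0 π) ∧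
    (∀ φ ∈ Set.Ioo 0 π, 0 < muH φ) ∧
    Tendsto muH (nhdsWithin 0 (Set.Ioo 0 π)) (nhds 0) ∧
    Tendsto muH (nhdsWithin π (Set.Ioo 0 π)) atTop ∧
    (∀ u : ℝ, 0 < u → ∃! φ, φ ∈ Set.Ioo 0 π ∧ muH φ = u) := by
  rw [nhdsWithin_Ioo_eq_nhdsGT pi_pos, nhdsWithin_Ioo_eq_nhdsLT pi_pos]
  exact ⟨strictMonoOn_muH, fun _ => muH_pos, tendsto_muH_nhdsGT_zero, tendsto_muH_nhdsLT_pi,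
    fun _ => strictMonoOn_muH.existsUnique_eq_of_tendsto pi_pos continuousOn_muH
      tendsto_muH_nhdsGT_zero tendsto_muH_nhdsLT_pi⟩
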